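/- Let Ω ⊂ ℝ³ be a bounded open set, let k > 0, and let δ₁, N, N′, λ be positive constants with k² < λδ₁/N². Then there exists c > 0, depending only on k, δ₁, N, N′ and λ, with the following property: for every smooth compactly supported u : ℝ³ → ℂ with support in Ω satisfying the Poincaré inequality ∫_Ω ‖∇u‖² dx ≥ λ ∫_Ω |u|² dx, and for all bounded measurable n₁, n₂ : Ω → ℝ with δ₁ ≤ n₂ ≤ N and δ₁ ≤ n₂ − n₁ ≤ N′ on Ω, one has Re ∫_Ω (n₂ − n₁)^{−1} (Δu + k²n₁u) · conj(Δu + k²n₂u) dx ≥ c ∫_Ω |Δu|² dx. (This is the coercivity of the interior transmission sesquilinear form under the condition n₁ − n₂ < 0, η = 0, k² < λ₁(Ω)·inf_Ω n₂/(sup_Ω n₂)².) -/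

import Mathlib

noncomputable section

open Real MeasureTheory

/-- Euclidean space `ℝ³`. -/
abbrev E3 := EuclideanSpace ℝ (Fin 3)

/-- The Laplacian (sum of second partial derivatives). -/
def lap (f : E3 → ℂ) (x : E3) : ℂ :=
  ∑ i : Fin 3, fderiv ℝ (fun y => fderiv ℝ f y (EuclideanSpace.single i 1)) x
    (EuclideanSpace.single i 1)

/-- The squared norm of the gradient: `‖∇u‖² = Σᵢ |∂ᵢu|²`. -/
def gradSq (f : E3 → ℂ) (x : E3) : ℝ :=
  ∑ i : Fin 3, ‖fderiv ℝ f x (EuclideanSpace.single i 1)‖ ^ 2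

namespace ITPAux

/-- real bilinear form `(a,b) ↦ (a * conj b).re` on `ℂ`. -/
def Bre : ℂ →L[ℝ] ℂ →L[ℝ] ℝ :=
  LinearMap.mkContinuous₂
    (LinearMap.mk₂ ℝ (fun a b => (a * (starRingEnd ℂ) b).re)
      (fun a a' b => by simp [add_mul])
      (fun r a b => by simp [Complex.real_smul, mul_assoc, Complex.re_ofReal_mul])
      (fun a b b' => by simp [mul_add])
      (fun r a b => by
        simp only [Complex.real_smul, map_mul, Complex.conj_ofReal, smul_eq_mul]
        rw [show a * (↑r * (starRingEnd ℂ) b) = ↑r * (a * (starRingEnd ℂ) b) by ring,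
          Complex.re_ofReal_mul]))
    1
    (fun a b => by
      simp only [LinearMap.mk₂_apply, one_mul]
      calc |(a * (starRingEnd ℂ) b).re| ≤ ‖a * (starRingEnd ℂ) b‖ := Complex.abs_re_le_norm _
        _ = ‖a‖ * ‖b‖ := by rw [norm_mul, RCLike.norm_conj])

@[simp] lemma Bre_apply (a b : ℂ) : Bre a b = (a * (starRingEnd ℂ) b).re := rfl

variable {u : E3 → ℂ}

/-- directional derivative -/
def du (u : E3 → ℂ) (v : E3) : E3 → ℂ := fun x => fderiv ℝ u x v

lemma contDiff_du (hu : ContDiff ℝ (⊤ : ℕ∞) u) (v : E3) : ContDiff ℝ (⊤ : ℕ∞) (du u v) :=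
  (ContinuousLinearMap.apply ℝ ℂ v).contDiff.comp (hu.fderiv_right (by simp))

lemma hcs_du (hc : HasCompactSupport u) (v : E3) : HasCompactSupport (du u v) :=
  (hc.fderiv ℝ).comp_left (g := fun L : E3 →L[ℝ] ℂ => L v) rfl

lemma integrable_mul_conj_re {A C : E3 → ℂ} (hA : Continuous A) (hC : Continuous C)
    (h : HasCompactSupport C) :
    Integrable (fun x => (A x * (starRingEnd ℂ) (C x)).re) := by
  apply Continuous.integrable_of_hasCompactSupport
  · exact Complex.continuous_re.comp (hA.mul (Complex.continuous_conj.comp hC))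
  · exact ((h.comp_left (g := starRingEnd ℂ) (by simp)).mul_left.comp_left
      (g := Complex.re) rfl)

/-- Integration by parts in direction `v`. -/
lemma ibp_dir (hu : ContDiff ℝ (⊤ : ℕ∞) u) (hc : HasCompactSupport u) (v : E3) :
    ∫ x, (u x * (starRingEnd ℂ) (du (du u v) v x)).re
      = - ∫ x, ‖du u v x‖ ^ 2 := by
  have hg : ContDiff ℝ (⊤ : ℕ∞) (du u v) := contDiff_du hu v
  have hgc : HasCompactSupport (du u v) := hcs_du hc v
  have key := integral_bilinear_fderiv_right_eq_neg_left_of_integrable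
    (μ := (volume : Measure E3)) (f := u) (g := du u v) (v := v) (B := Bre)
    (integrable_mul_conj_re hg.continuous hg.continuous hgc)
    (integrable_mul_conj_re hu.continuous ((contDiff_du hg v).continuous) (hcs_du hgc v))
    (integrable_mul_conj_re hu.continuous hg.continuous hgc)
    (fun x _ => hu.differentiable (by simp) x) (fun x _ => hg.differentiable (by simp) x)
  calc ∫ x, (u x * (starRingEnd ℂ) (du (du u v) v x)).re
      = ∫ x, Bre (u x) (fderiv ℝ (du u v) x v) := rfl
    _ = - ∫ x, Bre (fderiv ℝ u x v) (du u v x) := key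
    _ = - ∫ x, ‖du u v x‖ ^ 2 := by
        congr 1; apply integral_congr_ae; filter_upwards with x
        show (du u v x * (starRingEnd ℂ) (du u v x)).re = ‖du u v x‖ ^ 2
        rw [Complex.mul_conj, Complex.normSq_eq_norm_sq,
          Complex.ofReal_re]

lemma lap_eq (x : E3) :
    lap u x = ∑ i : Fin 3, du (du u (EuclideanSpace.single i 1)) (EuclideanSpace.single i 1) x :=
  rfl

lemma gradSq_eq (x : E3) :
    gradSq u x = ∑ i : Fin 3, ‖du u (EuclideanSpace.single i 1) x‖ ^ 2 := rfl

lemma tsupport_du (v : E3) : tsupport (du u v) ⊆ tsupport u := by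
  apply closure_minimal _ (isClosed_tsupport u)
  intro x hx
  by_contra hxu
  exact hx (by
    show fderiv ℝ u x v = 0
    have : fderiv ℝ u x = 0 := by
      by_contra h
      exact hxu (tsupport_fderiv_subset ℝ (subset_closure h))
    simp [this])

lemma du_eq_zero (v : E3) {x : E3} (hx : x ∉ tsupport u) : du u v x = 0 := by
  by_contra h
  exact hx (tsupport_du v (subset_closure h))

lemma lap_eq_zero {x : E3} (hx : x ∉ tsupport u) : lap u x = 0 := by
  rw [lap_eq]
  refine Finset.sum_eq_zero fun i _ => ?_
  exact du_eq_zero _ (fun h => hx (tsupport_du _ h))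

lemma gradSq_eq_zero {x : E3} (hx : x ∉ tsupport u) : gradSq u x = 0 := by
  rw [gradSq_eq]
  refine Finset.sum_eq_zero fun i _ => ?_
  rw [du_eq_zero _ hx]; simp

lemma cont_lap (hu : ContDiff ℝ (⊤ : ℕ∞) u) : Continuous (lap u) := by
  rw [show lap u = fun x => ∑ i : Fin 3,
    du (du u (EuclideanSpace.single i 1)) (EuclideanSpace.single i 1) x from rfl]
  exact continuous_finset_sum _ fun i _ =>
    (contDiff_du (contDiff_du hu _) _).continuous

lemma hcs_lap (hc : HasCompactSupport u) : HasCompactSupport (lap u) :=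
  HasCompactSupport.intro hc fun _ hx => lap_eq_zero hx

lemma cont_gradSq (hu : ContDiff ℝ (⊤ : ℕ∞) u) : Continuous (gradSq u) := by
  rw [show gradSq u = fun x => ∑ i : Fin 3, ‖du u (EuclideanSpace.single i 1) x‖ ^ 2 from rfl]
  exact continuous_finset_sum _ fun i _ =>
    ((contDiff_du hu _).continuous.norm.pow 2)

lemma hcs_gradSq (hc : HasCompactSupport u) : HasCompactSupport (gradSq u) :=
  HasCompactSupport.intro hc fun _ hx => gradSq_eq_zero hx

/-- Integration by parts for the Laplacian. -/
lemma ibp_lap (hu : ContDiff ℝ (⊤ : ℕ∞) u) (hc : HasCompactSupport u) :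
    ∫ x, (u x * (starRingEnd ℂ) (lap u x)).re = - ∫ x, gradSq u x := by
  have h1 : ∀ x, (u x * (starRingEnd ℂ) (lap u x)).re
      = ∑ i : Fin 3, (u x * (starRingEnd ℂ)
          (du (du u (EuclideanSpace.single i 1)) (EuclideanSpace.single i 1) x)).re := by
    intro x
    rw [lap_eq, map_sum, Finset.mul_sum, Complex.re_sum]
  simp_rw [h1, gradSq_eq]
  rw [integral_finset_sum _ fun i _ => integrable_mul_conj_re hu.continuous
      ((contDiff_du (contDiff_du hu _) _).continuous)
      (HasCompactSupport.intro hc fun x hx => du_eq_zero _ (fun h => hx (tsupport_du _ h))),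
    integral_finset_sum _ (f := fun i x => ‖du u (EuclideanSpace.single i 1) x‖ ^ 2) fun i _ =>
      (((contDiff_du hu _).continuous.norm.pow 2).integrable_of_hasCompactSupport
        (HasCompactSupport.intro hc fun x hx => by simp [du_eq_zero _ hx]))]
  rw [← Finset.sum_neg_distrib]
  exact Finset.sum_congr rfl fun i _ => ibp_dir hu hc _

/-- pointwise real-part formula for the integrand -/
lemma re_formula (m n₁ n₂ k : ℝ) (hm : m = n₂ - n₁) (hm0 : m ≠ 0) (D U : ℂ) :
    (((m : ℂ))⁻¹ * (D + (k : ℂ) ^ 2 * (n₁ : ℂ) * U)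
        * (starRingEnd ℂ) (D + (k : ℂ) ^ 2 * (n₂ : ℂ) * U)).re
      = m⁻¹ * ‖D + (k : ℂ) ^ 2 * (n₂ : ℂ) * U‖ ^ 2
        - k ^ 2 * (U * (starRingEnd ℂ) D).re - k ^ 4 * n₂ * ‖U‖ ^ 2 := by
  set z : ℂ := D + (k : ℂ) ^ 2 * (n₂ : ℂ) * U with hz
  have h1 : D + (k : ℂ) ^ 2 * (n₁ : ℂ) * U = z - (k : ℂ) ^ 2 * (m : ℂ) * U := by
    rw [hz, hm]; push_cast; ring
  have h2 : ((m : ℂ))⁻¹ * (D + (k : ℂ) ^ 2 * (n₁ : ℂ) * U) * (starRingEnd ℂ) z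
      = ((m : ℂ))⁻¹ * (z * (starRingEnd ℂ) z) - (k : ℂ) ^ 2 * (U * (starRingEnd ℂ) z) := by
    rw [h1]
    have hmc : (m : ℂ) ≠ 0 := by exact_mod_cast hm0
    field_simp
  rw [h2, Complex.mul_conj]
  have h3 : U * (starRingEnd ℂ) z
      = U * (starRingEnd ℂ) D + ((k ^ 2 * n₂ : ℝ) : ℂ) * (U * (starRingEnd ℂ) U) := by
    rw [hz]; push_cast; simp [map_add, map_mul, Complex.conj_ofReal]; ring
  have h4 : (((m : ℂ))⁻¹ * (Complex.normSq z : ℂ)).re = m⁻¹ * ‖z‖ ^ 2 := by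
    rw [← Complex.ofReal_inv, ← Complex.ofReal_mul, Complex.ofReal_re,
      Complex.normSq_eq_norm_sq]
  have h5 : ((k : ℂ) ^ 2 * (U * (starRingEnd ℂ) z)).re
      = k ^ 2 * (U * (starRingEnd ℂ) D).re + k ^ 4 * n₂ * ‖U‖ ^ 2 := by
    rw [h3, mul_add, Complex.add_re]
    congr 1
    · rw [show (k : ℂ) ^ 2 = ((k ^ 2 : ℝ) : ℂ) by push_cast; ring, Complex.re_ofReal_mul]
    · rw [Complex.mul_conj, show (k : ℂ) ^ 2 * (((k ^ 2 * n₂ : ℝ) : ℂ) * (Complex.normSq U : ℂ))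
          = ((k ^ 2 * (k ^ 2 * n₂) * Complex.normSq U : ℝ) : ℂ) by push_cast; ring,
        Complex.ofReal_re, Complex.normSq_eq_norm_sq]
      ring
  rw [Complex.sub_re, h4, h5]
  ring

/-- Peter–Paul: `(1-ε)‖D‖² - (1/ε-1)‖w‖² ≤ ‖D+w‖²`. -/
lemma peter_paul (ε : ℝ) (hε : 0 < ε) (D w : ℂ) :
    (1 - ε) * ‖D‖ ^ 2 - (1 / ε - 1) * ‖w‖ ^ 2 ≤ ‖D + w‖ ^ 2 := by
  have h1 : |‖D‖ - ‖w‖| ≤ ‖D + w‖ := by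
    have := abs_norm_sub_norm_le D (-w)
    simpa [sub_neg_eq_add] using this
  have h2 : (‖D‖ - ‖w‖) ^ 2 ≤ ‖D + w‖ ^ 2 := by
    rw [← sq_abs]
    exact pow_le_pow_left₀ (abs_nonneg _) h1 2
  have h3 : (1 - ε) * ‖D‖ ^ 2 - (1 / ε - 1) * ‖w‖ ^ 2 ≤ (‖D‖ - ‖w‖) ^ 2 := by
    have key : 0 ≤ (ε * ‖D‖ - ‖w‖) ^ 2 / ε := by positivity
    have expand : (‖D‖ - ‖w‖) ^ 2 - ((1 - ε) * ‖D‖ ^ 2 - (1 / ε - 1) * ‖w‖ ^ 2)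
        = (ε * ‖D‖ - ‖w‖) ^ 2 / ε := by
      field_simp; ring
    linarith [key, expand]
  linarith

end ITPAux

set_option maxHeartbeats 1000000 in
open ITPAux in
theorem interior_transmission_coercive_eta_zero (Ω : Set E3) (hΩo : IsOpen Ω)
    (hΩb : Bornology.IsBounded Ω) (k δ₁ N N' lam : ℝ)
    (hk : 0 < k) (hδ₁ : 0 < δ₁) (hN : 0 < N) (hN' : 0 < N') (hlam : 0 < lam)
    (hcond : k ^ 2 < lam * δ₁ / N ^ 2) :
    ∃ c > 0, ∀ u : E3 → ℂ, ContDiff ℝ (⊤ : ℕ∞) u → HasCompactSupport u → tsupport u ⊆ Ω →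
      (lam * ∫ x in Ω, ‖u x‖ ^ 2 ≤ ∫ x in Ω, gradSq u x) →
      ∀ n₁ n₂ : E3 → ℝ, Measurable n₁ → Measurable n₂ →
        (∀ x ∈ Ω, δ₁ ≤ n₂ x ∧ n₂ x ≤ N) →
        (∀ x ∈ Ω, δ₁ ≤ n₂ x - n₁ x ∧ n₂ x - n₁ x ≤ N') →
        c * ∫ x in Ω, ‖lap u x‖ ^ 2 ≤
          (∫ x in Ω, ((n₂ x - n₁ x : ℝ) : ℂ)⁻¹
              * (lap u x + (k : ℂ) ^ 2 * (n₁ x : ℂ) * u x)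
              * (starRingEnd ℂ) (lap u x + (k : ℂ) ^ 2 * (n₂ x : ℂ) * u x)).re := by
  have hΩm : MeasurableSet Ω := hΩo.measurableSet
  -- constants
  have hN2 : (0 : ℝ) < N ^ 2 := by positivity
  have h0 : k ^ 2 * N ^ 2 < lam * δ₁ := (lt_div_iff₀ hN2).mp hcond
  set α : ℝ := k ^ 2 * lam * δ₁ - k ^ 4 * N ^ 2 with hα_def
  have hα : 0 < α := by
    have hk2 : 0 < k ^ 2 := by positivity
    nlinarith [mul_lt_mul_of_pos_left h0 hk2]
  set A : ℝ := 2 * δ₁ * k ^ 4 * N ^ 2 with hA_def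
  have hA : 0 < A := by positivity
  set ε : ℝ := A / (A + α * N') with hε_def
  have hε : 0 < ε := div_pos hA (add_pos hA (mul_pos hα hN'))
  have hε1 : ε < 1 := by
    rw [hε_def, div_lt_one (by positivity)]
    nlinarith [mul_pos hα hN']
  have hεformula : (1 / ε - 1) * (k ^ 4 * N ^ 2) / N' = α / (2 * δ₁) := by
    rw [hε_def]
    field_simp
    ring
  refine ⟨(1 - ε) / N', div_pos (by linarith) hN', ?_⟩
  intro u hu hcu hsup hpoin n₁ n₂ hmn₁ hmn₂ hn₂ hm
  rcases Set.eq_empty_or_nonempty Ω with hE | ⟨x₀, hx₀⟩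
  · simp [hE]
  have hδN : δ₁ ≤ N := le_trans (hn₂ x₀ hx₀).1 (hn₂ x₀ hx₀).2
  set c : ℝ := (1 - ε) / N' with hc_def
  set C : ℝ := α / (2 * δ₁) + k ^ 4 * N with hC_def
  have hCk : C ≤ k ^ 2 * lam := by
    rw [hC_def]
    have h2δ : (0 : ℝ) < 2 * δ₁ := by positivity
    have hdiv : α / (2 * δ₁) ≤ k ^ 2 * lam - k ^ 4 * N := by
      rw [div_le_iff₀ h2δ, hα_def]
      nlinarith [mul_le_mul_of_nonneg_left hδN (by positivity : (0:ℝ) ≤ k ^ 4 * N),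
        mul_lt_mul_of_pos_left h0 (by positivity : (0:ℝ) < k ^ 2),
        mul_le_mul_of_nonneg_left hδN (by positivity : (0:ℝ) ≤ k ^ 2 * lam)]
    linarith
  -- basic continuity / support facts
  have hucont : Continuous u := hu.continuous
  have hDcont : Continuous (lap u) := cont_lap hu
  have hDcs : HasCompactSupport (lap u) := hcs_lap hcu
  -- integrable real building blocks
  have hint_u2 : Integrable (fun x => ‖u x‖ ^ 2) := by
    refine (hucont.norm.pow 2).integrable_of_hasCompactSupport
      (HasCompactSupport.intro hcu fun x hx => ?_)
    simp [image_eq_zero_of_notMem_tsupport hx]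
  have hint_D2 : Integrable (fun x => ‖lap u x‖ ^ 2) := by
    refine (hDcont.norm.pow 2).integrable_of_hasCompactSupport
      (HasCompactSupport.intro hcu fun x hx => ?_)
    simp [lap_eq_zero hx]
  have hint_p : Integrable (fun x => (u x * (starRingEnd ℂ) (lap u x)).re) :=
    integrable_mul_conj_re hucont hDcont hDcs
  have hint_g : Integrable (gradSq u) :=
    (cont_gradSq hu).integrable_of_hasCompactSupport (hcs_gradSq hcu)
  -- the complex integrand
  set F : E3 → ℂ := fun x => ((n₂ x - n₁ x : ℝ) : ℂ)⁻¹
      * (lap u x + (k : ℂ) ^ 2 * (n₁ x : ℂ) * u x)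
      * (starRingEnd ℂ) (lap u x + (k : ℂ) ^ 2 * (n₂ x : ℂ) * u x) with hF_def
  have hFint : IntegrableOn F Ω := by
    have hFmeas : AEStronglyMeasurable F (volume.restrict Ω) := by
      refine Measurable.aestronglyMeasurable ?_
      rw [hF_def]
      exact (((Complex.measurable_ofReal.comp (hmn₂.sub hmn₁)).inv.mul
        (hDcont.measurable.add
          (((Complex.measurable_ofReal.comp hmn₁).const_mul ((k : ℂ) ^ 2)).mul
            hucont.measurable))).mul
        (Complex.continuous_conj.measurable.comp (hDcont.measurable.add
          (((Complex.measurable_ofReal.comp hmn₂).const_mul ((k : ℂ) ^ 2)).mul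
            hucont.measurable))))
    have hgint : Integrable (fun x => δ₁⁻¹ * ((‖lap u x‖ + k ^ 2 * (N + N') * ‖u x‖)
        * (‖lap u x‖ + k ^ 2 * N * ‖u x‖))) := by
      apply Continuous.integrable_of_hasCompactSupport
      · exact continuous_const.mul
          (((hDcont.norm.add (continuous_const.mul hucont.norm)).mul
            (hDcont.norm.add (continuous_const.mul hucont.norm))))
      · refine HasCompactSupport.intro hcu fun x hx => ?_
        have h1 : u x = 0 := image_eq_zero_of_notMem_tsupport hx
        have h2 : lap u x = 0 := lap_eq_zero hx
        simp [h1, h2]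
    refine Integrable.mono' hgint.integrableOn hFmeas ?_
    rw [ae_restrict_iff' hΩm]
    filter_upwards with x hx
    obtain ⟨h2a, h2b⟩ := hn₂ x hx
    obtain ⟨hma, hmb⟩ := hm x hx
    have hmpos : 0 < n₂ x - n₁ x := lt_of_lt_of_le hδ₁ hma
    have hn1b : |n₁ x| ≤ N + N' := abs_le.mpr ⟨by linarith, by linarith⟩
    have hinv : ‖((n₂ x - n₁ x : ℝ) : ℂ)⁻¹‖ ≤ δ₁⁻¹ := by
      rw [norm_inv, Complex.norm_real, Real.norm_eq_abs, abs_of_pos hmpos]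
      exact inv_anti₀ hδ₁ hma
    have hnorm1 : ‖(k : ℂ) ^ 2 * ((n₁ x : ℝ) : ℂ) * u x‖ = k ^ 2 * |n₁ x| * ‖u x‖ := by
      rw [norm_mul, norm_mul, norm_pow, Complex.norm_real, Complex.norm_real,
        Real.norm_eq_abs, Real.norm_eq_abs, abs_of_pos hk]
    have hnorm2 : ‖(k : ℂ) ^ 2 * ((n₂ x : ℝ) : ℂ) * u x‖ = k ^ 2 * |n₂ x| * ‖u x‖ := by
      rw [norm_mul, norm_mul, norm_pow, Complex.norm_real, Complex.norm_real,
        Real.norm_eq_abs, Real.norm_eq_abs, abs_of_pos hk]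
    have hA1 : ‖lap u x + (k : ℂ) ^ 2 * ((n₁ x : ℝ) : ℂ) * u x‖
        ≤ ‖lap u x‖ + k ^ 2 * (N + N') * ‖u x‖ := by
      refine le_trans (norm_add_le _ _) ?_
      rw [hnorm1]
      have : k ^ 2 * |n₁ x| * ‖u x‖ ≤ k ^ 2 * (N + N') * ‖u x‖ :=
        mul_le_mul_of_nonneg_right
          (mul_le_mul_of_nonneg_left hn1b (by positivity)) (norm_nonneg (u x))
      linarith
    have hA2 : ‖(starRingEnd ℂ) (lap u x + (k : ℂ) ^ 2 * ((n₂ x : ℝ) : ℂ) * u x)‖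
        ≤ ‖lap u x‖ + k ^ 2 * N * ‖u x‖ := by
      rw [RCLike.norm_conj]
      refine le_trans (norm_add_le _ _) ?_
      rw [hnorm2, abs_of_pos (lt_of_lt_of_le hδ₁ h2a)]
      have : k ^ 2 * n₂ x * ‖u x‖ ≤ k ^ 2 * N * ‖u x‖ :=
        mul_le_mul_of_nonneg_right
          (mul_le_mul_of_nonneg_left h2b (by positivity)) (norm_nonneg (u x))
      linarith
    simp only [hF_def]
    rw [norm_mul, norm_mul]
    refine le_trans (mul_le_mul (mul_le_mul hinv hA1 (norm_nonneg _) (by positivity))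
      hA2 (norm_nonneg _) (by positivity)) (le_of_eq (by ring))
  -- pass to real part
  have hre : (∫ x in Ω, F x).re = ∫ x in Ω, (F x).re := by
    have := integral_re hFint
    simp only [RCLike.re_to_complex] at this
    exact this.symm
  rw [show (∫ x in Ω, ((n₂ x - n₁ x : ℝ) : ℂ)⁻¹
      * (lap u x + (k : ℂ) ^ 2 * (n₁ x : ℂ) * u x)
      * (starRingEnd ℂ) (lap u x + (k : ℂ) ^ 2 * (n₂ x : ℂ) * u x)) = ∫ x in Ω, F x from rfl,
    hre]
  -- pointwise lower bound on Ω
  set φ : E3 → ℝ := fun x => c * ‖lap u x‖ ^ 2 - C * ‖u x‖ ^ 2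
      - k ^ 2 * (u x * (starRingEnd ℂ) (lap u x)).re with hφ_def
  have hφint : IntegrableOn φ Ω := by
    exact (((hint_D2.const_mul c).sub (hint_u2.const_mul C)).sub
      (hint_p.const_mul (k ^ 2))).integrableOn
  have hpt : ∀ x ∈ Ω, φ x ≤ (F x).re := by
    intro x hx
    obtain ⟨h2a, h2b⟩ := hn₂ x hx
    obtain ⟨hma, hmb⟩ := hm x hx
    have hmpos : 0 < n₂ x - n₁ x := lt_of_lt_of_le hδ₁ hma
    have hm0 : n₂ x - n₁ x ≠ 0 := ne_of_gt hmpos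
    rw [hφ_def, hF_def]
    simp only []
    rw [re_formula (n₂ x - n₁ x) (n₁ x) (n₂ x) k rfl hm0 (lap u x) (u x)]
    have hpp := peter_paul ε hε (lap u x) ((k : ℂ) ^ 2 * ((n₂ x : ℝ) : ℂ) * u x)
    have hnw : ‖(k : ℂ) ^ 2 * ((n₂ x : ℝ) : ℂ) * u x‖ ^ 2
        = k ^ 4 * (n₂ x) ^ 2 * ‖u x‖ ^ 2 := by
      rw [norm_mul, norm_mul, norm_pow, Complex.norm_real, Complex.norm_real,
        Real.norm_eq_abs, Real.norm_eq_abs, abs_of_pos hk,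
        abs_of_pos (lt_of_lt_of_le hδ₁ h2a)]
      ring
    have hεnn : 0 ≤ 1 / ε - 1 := by
      have : (1 : ℝ) ≤ 1 / ε := one_le_one_div hε hε1.le
      linarith
    have hNinv : (N')⁻¹ * ‖lap u x + (k : ℂ) ^ 2 * ((n₂ x : ℝ) : ℂ) * u x‖ ^ 2
        ≤ (n₂ x - n₁ x)⁻¹ * ‖lap u x + (k : ℂ) ^ 2 * ((n₂ x : ℝ) : ℂ) * u x‖ ^ 2 :=
      mul_le_mul_of_nonneg_right (inv_anti₀ hmpos hmb) (by positivity)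
    have key1 : (N')⁻¹ * ((1 - ε) * ‖lap u x‖ ^ 2
          - (1 / ε - 1) * ‖(k : ℂ) ^ 2 * ((n₂ x : ℝ) : ℂ) * u x‖ ^ 2)
        ≤ (N')⁻¹ * ‖lap u x + (k : ℂ) ^ 2 * ((n₂ x : ℝ) : ℂ) * u x‖ ^ 2 :=
      mul_le_mul_of_nonneg_left hpp (by positivity)
    have e1 : (N')⁻¹ * ((1 - ε) * ‖lap u x‖ ^ 2) = c * ‖lap u x‖ ^ 2 := by
      rw [hc_def]; ring
    have hwle : ‖(k : ℂ) ^ 2 * ((n₂ x : ℝ) : ℂ) * u x‖ ^ 2 ≤ k ^ 4 * N ^ 2 * ‖u x‖ ^ 2 := by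
      rw [hnw]
      have hsq : (n₂ x) ^ 2 ≤ N ^ 2 := by nlinarith
      exact mul_le_mul_of_nonneg_right
        (mul_le_mul_of_nonneg_left hsq (by positivity)) (sq_nonneg ‖u x‖)
    have e2 : (N')⁻¹ * ((1 / ε - 1) * ‖(k : ℂ) ^ 2 * ((n₂ x : ℝ) : ℂ) * u x‖ ^ 2)
        ≤ (N')⁻¹ * ((1 / ε - 1) * (k ^ 4 * N ^ 2 * ‖u x‖ ^ 2)) :=
      mul_le_mul_of_nonneg_left (mul_le_mul_of_nonneg_left hwle hεnn)
        (inv_nonneg.mpr hN'.le)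
    have e3 : (N')⁻¹ * ((1 / ε - 1) * (k ^ 4 * N ^ 2 * ‖u x‖ ^ 2))
        = (α / (2 * δ₁)) * ‖u x‖ ^ 2 := by
      rw [← hεformula]; ring
    have e4 : k ^ 4 * n₂ x * ‖u x‖ ^ 2 ≤ k ^ 4 * N * ‖u x‖ ^ 2 :=
      mul_le_mul_of_nonneg_right
        (mul_le_mul_of_nonneg_left h2b (by positivity)) (sq_nonneg ‖u x‖)
    have hCC : C = α / (2 * δ₁) + k ^ 4 * N := hC_def
    linarith [key1, hNinv, e1, e2, e3, e4]
  have hmono : ∫ x in Ω, φ x ≤ ∫ x in Ω, (F x).re :=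
    setIntegral_mono_on hφint hFint.re hΩm hpt
  -- compute ∫ φ
  have hsplit : ∫ x in Ω, φ x = c * (∫ x in Ω, ‖lap u x‖ ^ 2) - C * (∫ x in Ω, ‖u x‖ ^ 2)
      - k ^ 2 * (∫ x in Ω, (u x * (starRingEnd ℂ) (lap u x)).re) := by
    have haD : Integrable (fun x => c * ‖lap u x‖ ^ 2) := hint_D2.const_mul c
    have haU : Integrable (fun x => C * ‖u x‖ ^ 2) := hint_u2.const_mul C
    have haP : Integrable (fun x => k ^ 2 * (u x * (starRingEnd ℂ) (lap u x)).re) :=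
      hint_p.const_mul _
    have hab : Integrable (fun x => c * ‖lap u x‖ ^ 2 - C * ‖u x‖ ^ 2) := haD.sub haU
    rw [hφ_def]
    rw [integral_sub hab.integrableOn haP.integrableOn,
      integral_sub haD.integrableOn haU.integrableOn,
      integral_const_mul, integral_const_mul, integral_const_mul]
  -- integration by parts
  have hibp : ∫ x in Ω, (u x * (starRingEnd ℂ) (lap u x)).re = - ∫ x in Ω, gradSq u x := by
    rw [setIntegral_eq_integral_of_forall_compl_eq_zero (f := fun x =>
        (u x * (starRingEnd ℂ) (lap u x)).re) (fun x hx => by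
      have h0 : u x = 0 := image_eq_zero_of_notMem_tsupport (fun h => hx (hsup h))
      simp [h0]),
      setIntegral_eq_integral_of_forall_compl_eq_zero (f := gradSq u) (fun x hx =>
        gradSq_eq_zero (fun h => hx (hsup h)))]
    exact ibp_lap hu hcu
  -- conclude
  have hIu : 0 ≤ ∫ x in Ω, ‖u x‖ ^ 2 := setIntegral_nonneg hΩm fun x _ => by positivity
  have hk2 : (0 : ℝ) < k ^ 2 := by positivity
  calc c * ∫ x in Ω, ‖lap u x‖ ^ 2
      ≤ ∫ x in Ω, φ x := by
        rw [hsplit, hibp]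
        have h1 : k ^ 2 * (lam * ∫ x in Ω, ‖u x‖ ^ 2) ≤ k ^ 2 * ∫ x in Ω, gradSq u x :=
          mul_le_mul_of_nonneg_left hpoin (le_of_lt hk2)
        have h2 : C * (∫ x in Ω, ‖u x‖ ^ 2) ≤ k ^ 2 * lam * (∫ x in Ω, ‖u x‖ ^ 2) :=
          mul_le_mul_of_nonneg_right hCk hIu
        nlinarith [h1, h2]
    _ ≤ ∫ x in Ω, (F x).re := hmono
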